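/- arXiv:2008.13688 — 2 statements merged into one kernel-verified Lean document; each statement's English description precedes it below -/
import Mathlib

section
/- Let A be a bounded K-lattice, with ∼x := x → 1, and let A⁻ be its negative cone. Then the map f(a) = (a ∧ 1, ∼a ∧ 1) is an embedding of A into the twist-product K(A⁻): f is injective, f(0) = (0,1), f(1) = (1,1), and f preserves ∨, ∧, · and →, where K(A⁻) carries the twist-product operations built from the negative-cone operations of A⁻. -/
class CRL (α : Type*) extends Lattice α, CommMonoid α where
  himp : α → α → α
  resid : ∀ a b c : α, a * b ≤ c ↔ a ≤ himp b c

class CIRL (α : Type*) extends CRL α where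
  le_one : ∀ a : α, a ≤ 1

class BCRL (α : Type*) extends CIRL α, Zero α where
  zero_le : ∀ a : α, (0 : α) ≤ a

class KLattice (α : Type*) extends CRL α where
  one_involutive : ∀ x : α, himp (himp x 1) 1 = x
  one_distrib_meet : ∀ x y z : α, (x = 1 ∨ y = 1 ∨ z = 1) →
    x ⊓ (y ⊔ z) = (x ⊓ y) ⊔ (x ⊓ z)
  one_distrib_join : ∀ x y z : α, (x = 1 ∨ y = 1 ∨ z = 1) →
    x ⊔ (y ⊓ z) = (x ⊔ y) ⊓ (x ⊔ z)
  K1 : ∀ x y : α, (x * y) ⊓ 1 = (x ⊓ 1) * (y ⊓ 1)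
  K2 : ∀ x y : α, himp (x ⊓ 1) y ⊓ himp (himp y 1 ⊓ 1) (himp x 1) = himp x y

class BKLattice (α : Type*) extends KLattice α, Zero α where
  zero_le : ∀ a : α, (0 : α) ≤ a

/-- The negative-cone implication of a (bounded) K-lattice: `a →⁻ b = (a → b) ∧ 1`. -/
def coneImp {α : Type*} [BKLattice α] (a b : α) : α := CRL.himp a b ⊓ 1

/-- The canonical map `f(a) = (a ∧ 1, ∼a ∧ 1)` from a bounded K-lattice into the
twist-product of its negative cone. -/
def coneEmb {α : Type*} [BKLattice α] (a : α) : α × α :=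
  (a ⊓ 1, CRL.himp a 1 ⊓ 1)

section Aux
variable {α : Type*} [CRL α]

lemma aux_le_himp {a b c : α} : a ≤ CRL.himp b c ↔ a * b ≤ c := (CRL.resid a b c).symm

lemma aux_one_le_himp {a b : α} : 1 ≤ CRL.himp a b ↔ a ≤ b := by
  rw [aux_le_himp, one_mul]

lemma aux_mul_mono {a b : α} (c : α) (h : a ≤ b) : a * c ≤ b * c :=
  aux_le_himp.mp (h.trans (aux_le_himp.mpr le_rfl))

lemma aux_himp_mono {a b c : α} (h : b ≤ c) : CRL.himp a b ≤ CRL.himp a c := by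
  rw [aux_le_himp]
  exact (aux_le_himp.mp le_rfl).trans h

lemma aux_himp_anti {a b c : α} (h : a ≤ b) : CRL.himp b c ≤ CRL.himp a c := by
  rw [aux_le_himp]
  calc CRL.himp b c * a ≤ CRL.himp b c * b := by
        rw [mul_comm _ a, mul_comm _ b]; exact aux_mul_mono _ h
    _ ≤ c := aux_le_himp.mp le_rfl

lemma aux_himp_inf (a b c : α) :
    CRL.himp a (b ⊓ c) = CRL.himp a b ⊓ CRL.himp a c := by
  refine le_antisymm (le_inf (aux_himp_mono inf_le_left) (aux_himp_mono inf_le_right)) ?_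
  refine aux_le_himp.mpr (le_inf ?_ ?_)
  · exact (aux_mul_mono a inf_le_left).trans (aux_le_himp.mp le_rfl)
  · exact (aux_mul_mono a inf_le_right).trans (aux_le_himp.mp le_rfl)

lemma aux_himp_sup (a b c : α) :
    CRL.himp (a ⊔ b) c = CRL.himp a c ⊓ CRL.himp b c := by
  refine le_antisymm (le_inf (aux_himp_anti le_sup_left) (aux_himp_anti le_sup_right)) ?_
  refine aux_le_himp.mpr ?_
  rw [mul_comm]
  refine aux_le_himp.mp (sup_le ?_ ?_)
  · exact aux_le_himp.mpr (by rw [mul_comm]; exact aux_le_himp.mp inf_le_left)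
  · exact aux_le_himp.mpr (by rw [mul_comm]; exact aux_le_himp.mp inf_le_right)

lemma aux_himp_curry (a b c : α) :
    CRL.himp (a * b) c = CRL.himp a (CRL.himp b c) := by
  refine le_antisymm ?_ ?_
  · refine aux_le_himp.mpr (aux_le_himp.mpr ?_)
    rw [mul_assoc]
    exact aux_le_himp.mp le_rfl
  · refine aux_le_himp.mpr ?_
    rw [← mul_assoc]
    exact aux_le_himp.mp (aux_le_himp.mp le_rfl)

end Aux

section KAux
variable {α : Type*} [KLattice α]

lemma aux_nn (x : α) : CRL.himp (CRL.himp x 1) 1 = x := KLattice.one_involutive x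

lemma aux_n_inf (x y : α) :
    CRL.himp (x ⊓ y) 1 = CRL.himp x 1 ⊔ CRL.himp y 1 := by
  have h : CRL.himp (CRL.himp x 1 ⊔ CRL.himp y 1) 1 = x ⊓ y := by
    rw [aux_himp_sup, aux_nn, aux_nn]
  rw [← h, aux_nn]

lemma aux_himp_eq (a b : α) :
    CRL.himp a b = CRL.himp (a * CRL.himp b 1) 1 := by
  rw [aux_himp_curry, aux_nn]

lemma aux_cone {x : α} (hx : x ≤ 1) (y : α) :
    CRL.himp x (y ⊓ 1) ⊓ 1 = CRL.himp x y ⊓ 1 := by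
  rw [aux_himp_inf, inf_assoc, inf_eq_right.mpr (aux_one_le_himp.mpr hx)]

lemma aux_inf_one (a b : α) : (a ⊓ b) ⊓ 1 = (a ⊓ 1) ⊓ (b ⊓ 1) := by
  rw [inf_inf_inf_comm, inf_idem]

lemma aux_sup_one (a b : α) : (a ⊔ b) ⊓ 1 = (a ⊓ 1) ⊔ (b ⊓ 1) := by
  rw [inf_comm, KLattice.one_distrib_meet 1 a b (Or.inl rfl), inf_comm 1 a, inf_comm 1 b]

end KAux

/-- for a bounded K-lattice `A`, the map `f(a) = (a ∧ 1, ∼a ∧ 1)`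
is an embedding of `A` into the twist-product `K(A⁻)` of its negative cone:
it is injective, sends `0` to `(0,1)` and `1` to `(1,1)`, and preserves `∨`,
`∧`, `·` and `→`, where `K(A⁻)` carries the twist operations built from the
negative-cone operations (`⊔`, `⊓`, `·` and `→⁻`). -/
theorem bounded_klattice_embeds_in_twist {α : Type*} [BKLattice α] :
    Function.Injective (coneEmb (α := α)) ∧
    coneEmb (0 : α) = ((0 : α), (1 : α)) ∧
    coneEmb (1 : α) = ((1 : α), (1 : α)) ∧
    (∀ a b : α,
      coneEmb (a ⊔ b) =
        ((coneEmb a).1 ⊔ (coneEmb b).1, (coneEmb a).2 ⊓ (coneEmb b).2) ∧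
      coneEmb (a ⊓ b) =
        ((coneEmb a).1 ⊓ (coneEmb b).1, (coneEmb a).2 ⊔ (coneEmb b).2) ∧
      coneEmb (a * b) =
        ((coneEmb a).1 * (coneEmb b).1,
          coneImp (coneEmb a).1 (coneEmb b).2 ⊓ coneImp (coneEmb b).1 (coneEmb a).2) ∧
      coneEmb (CRL.himp a b) =
        (coneImp (coneEmb a).1 (coneEmb b).1 ⊓ coneImp (coneEmb b).2 (coneEmb a).2,
          (coneEmb a).1 * (coneEmb b).2)) := by
  refine ⟨?_, ?_, ?_, ?_⟩
  · -- injectivity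
    intro a b h
    simp only [coneEmb, Prod.mk.injEq] at h
    obtain ⟨h1, h2⟩ := h
    have key : ∀ x y : α, x ⊓ 1 = y ⊓ 1 →
        CRL.himp x 1 ⊓ 1 = CRL.himp y 1 ⊓ 1 → x ≤ y := by
      intro x y hx hn
      have h1' : (1 : α) ≤ CRL.himp x y := by
        rw [← KLattice.K2 x y]
        refine le_inf (aux_one_le_himp.mpr ?_) (aux_one_le_himp.mpr ?_)
        · rw [hx]; exact inf_le_left
        · rw [← hn]; exact inf_le_left
      exact aux_one_le_himp.mp h1'
    exact le_antisymm (key a b h1 h2) (key b a h1.symm h2.symm)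
  · -- zero
    simp only [coneEmb, Prod.mk.injEq]
    exact ⟨inf_eq_left.mpr (BKLattice.zero_le 1),
      inf_eq_right.mpr (aux_one_le_himp.mpr (BKLattice.zero_le 1))⟩
  · -- one
    simp only [coneEmb, Prod.mk.injEq]
    exact ⟨inf_idem 1, inf_eq_right.mpr (aux_one_le_himp.mpr le_rfl)⟩
  · intro a b
    refine ⟨?_, ?_, ?_, ?_⟩
    · -- sup
      simp only [coneEmb, Prod.mk.injEq]
      constructor
      · exact aux_sup_one a b
      · rw [aux_himp_sup, aux_inf_one]
    · -- inf
      simp only [coneEmb, Prod.mk.injEq]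
      constructor
      · exact aux_inf_one a b
      · rw [aux_n_inf, aux_sup_one]
    · -- mul
      simp only [coneEmb, coneImp, Prod.mk.injEq]
      constructor
      · exact KLattice.K1 a b
      · have hK : CRL.himp (a ⊓ 1) (CRL.himp b 1) ⊓ CRL.himp (b ⊓ 1) (CRL.himp a 1)
            = CRL.himp (a * b) 1 := by
          have h := KLattice.K2 a (CRL.himp b 1)
          rw [aux_nn] at h
          rw [h, ← aux_himp_curry]
        rw [aux_cone inf_le_right, aux_cone inf_le_right, ← aux_inf_one, hK]
    · -- himp
      simp only [coneEmb, coneImp, Prod.mk.injEq]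
      constructor
      · rw [aux_cone inf_le_right, aux_cone inf_le_right, ← aux_inf_one,
          KLattice.K2 a b]
      · have hn : CRL.himp (CRL.himp a b) 1 = a * CRL.himp b 1 := by
          rw [aux_himp_eq a b, aux_nn]
        rw [hn, KLattice.K1]
end

section
/- Let A be a bounded K-lattice, with ∼x := x → 1. Then there exists at most one element o ∈ A such that ∼o = o and o ∧ 1 = 0; that is, if ∼o = o, o ∧ 1 = 0, ∼o' = o' and o' ∧ 1 = 0, then o = o'. -/
section Aux
variable {α : Type*} [KLattice α]
open CRL

private lemma hres {a b c : α} : a * b ≤ c ↔ a ≤ CRL.himp b c := CRL.resid a b c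

private lemma mul_le_mul_r' {a b : α} (h : a ≤ b) (c : α) : a * c ≤ b * c :=
  (CRL.resid a c (b*c)).mpr (h.trans ((CRL.resid b c (b*c)).mp le_rfl))

private lemma himp_anti {a b : α} (c : α) (h : a ≤ b) : CRL.himp b c ≤ CRL.himp a c := by
  refine (CRL.resid _ _ _).mp ?_
  calc CRL.himp b c * a = a * CRL.himp b c := mul_comm _ _
    _ ≤ b * CRL.himp b c := mul_le_mul_r' h _
    _ = CRL.himp b c * b := mul_comm _ _
    _ ≤ c := (CRL.resid (CRL.himp b c) b c).mpr le_rfl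

private lemma neg_join (a b : α) : CRL.himp (a ⊔ b) 1 = CRL.himp a 1 ⊓ CRL.himp b 1 := by
  apply le_antisymm
  · exact le_inf (himp_anti 1 le_sup_left) (himp_anti 1 le_sup_right)
  · refine (CRL.resid _ _ _).mp ?_
    rw [mul_comm]
    refine (CRL.resid _ _ _).mpr (sup_le ?_ ?_)
    · refine (CRL.resid _ _ _).mp ?_
      rw [mul_comm]
      exact (mul_le_mul_r' inf_le_left a).trans ((CRL.resid (CRL.himp a 1) a 1).mpr le_rfl)
    · refine (CRL.resid _ _ _).mp ?_
      rw [mul_comm]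
      exact (mul_le_mul_r' inf_le_right b).trans ((CRL.resid (CRL.himp b 1) b 1).mpr le_rfl)

private lemma neg_meet (a b : α) : CRL.himp (a ⊓ b) 1 = CRL.himp a 1 ⊔ CRL.himp b 1 := by
  have h := neg_join (CRL.himp a 1) (CRL.himp b 1)
  rw [KLattice.one_involutive, KLattice.one_involutive] at h
  calc CRL.himp (a ⊓ b) 1 = CRL.himp (CRL.himp (CRL.himp a 1 ⊔ CRL.himp b 1) 1) 1 := by rw [h]
    _ = CRL.himp a 1 ⊔ CRL.himp b 1 := KLattice.one_involutive _

private lemma neg_one : CRL.himp (1 : α) 1 = 1 := by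
  apply le_antisymm
  · have := (CRL.resid (CRL.himp (1:α) 1) 1 1).mpr le_rfl; rwa [mul_one] at this
  · exact (CRL.resid (1:α) 1 1).mp (by rw [one_mul])

end Aux

/-- in a bounded K-lattice there is at most one element `o` with
`∼o = o` and `o ∧ 1 = 0` (where `∼x = x → 1`). -/
theorem at_most_one_fixpoint {α : Type*} [BKLattice α] (o o' : α)
    (h1 : CRL.himp o 1 = o) (h2 : o ⊓ 1 = 0)
    (h1' : CRL.himp o' 1 = o') (h2' : o' ⊓ 1 = 0) :
    o = o' := by
  have key : ∀ x : α, CRL.himp x 1 = x → x ⊓ 1 = 0 → CRL.himp (0:α) 1 = x ⊔ 1 := by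
    intro x hx hx0
    rw [← hx0, neg_meet, hx, neg_one]
  have hj : o ⊔ 1 = o' ⊔ 1 := by rw [← key o h1 h2, ← key o' h1' h2']
  calc o = o ⊓ (o ⊔ 1) := (inf_sup_self).symm
    _ = o ⊓ (o' ⊔ 1) := by rw [hj]
    _ = (o ⊓ o') ⊔ (o ⊓ 1) := KLattice.one_distrib_meet o o' 1 (Or.inr (Or.inr rfl))
    _ = (o' ⊓ o) ⊔ (o' ⊓ 1) := by rw [h2, h2', inf_comm]
    _ = o' ⊓ (o ⊔ 1) := (KLattice.one_distrib_meet o' o 1 (Or.inr (Or.inr rfl))).symm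
    _ = o' ⊓ (o' ⊔ 1) := by rw [hj]
    _ = o' := inf_sup_self
end
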